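/- Let 1 ≤ m ≤ l be integers. The polynomial function H^{(l,m)}(x,y,z) = √(2(l−m)!/(l+m)!) · Π_l^m(x,y,z) · B_m(y,z) is harmonic on all of ℝ³: ∂²H^{(l,m)}/∂x² + ∂²H^{(l,m)}/∂y² + ∂²H^{(l,m)}/∂z² = 0 at every point of ℝ³. -/

import Mathlib

/-- Points of ℝ³, represented as functions `Fin 3 → ℝ`. -/
abbrev R3 := Fin 3 → ℝ

/-- Partial derivative of a scalar function in the `i`-th coordinate direction. -/
noncomputable def pd (i : Fin 3) (f : R3 → ℝ) (x : R3) : ℝ :=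
  fderiv ℝ f x (Pi.single i 1)

/-- Laplacian of a scalar function on ℝ³. -/
noncomputable def lap3 (f : R3 → ℝ) (x : R3) : ℝ :=
  ∑ i, pd i (fun y => pd i f y) x

/-- The coefficient `γ_{lk}^{(m)} = (−1)^k 2^{−l} C(l,k) C(2l−2k,l) (l−2k)!/(l−2k−m)!`. -/
noncomputable def gam (l k m : ℕ) : ℝ :=
  (-1 : ℝ) ^ k * (2 : ℝ)⁻¹ ^ l * (l.choose k : ℝ) * ((2 * l - 2 * k).choose l : ℝ) *
    ((l - 2 * k).factorial : ℝ) / ((l - 2 * k - m).factorial : ℝ)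

/-- `B_m(y,z)`, the imaginary part of `(y+iz)^m`. -/
noncomputable def Bm (m : ℕ) (y z : ℝ) : ℝ := (((y : ℂ) + (z : ℂ) * Complex.I) ^ m).im

/-- `Π_l^m(x,y,z) = Σ_{k=0}^{⌊(l−m)/2⌋} γ_{lk}^{(m)} (x²+y²+z²)^k x^{l−2k−m}`. -/
noncomputable def Pim (l m : ℕ) (x y z : ℝ) : ℝ :=
  ∑ k ∈ Finset.range ((l - m) / 2 + 1),
    gam l k m * (x ^ 2 + y ^ 2 + z ^ 2) ^ k * x ^ (l - 2 * k - m)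

/-- The polynomial `H^{(l,m)}(x,y,z) = √(2(l−m)!/(l+m)!) Π_l^m(x,y,z) B_m(y,z)`. -/
noncomputable def Hc (l m : ℕ) (x y z : ℝ) : ℝ :=
  Real.sqrt (2 * ((l - m).factorial : ℝ) / ((l + m).factorial : ℝ)) * Pim l m x y z * Bm m y z

/-- `H^{(l,m)}` as a function on ℝ³. -/
noncomputable def Hfun (l m : ℕ) : R3 → ℝ := fun v => Hc l m (v 0) (v 1) (v 2)

/-!
Write `H^{(l,m)} = c · Σ_k γ_k T_k` with `T_k = r^{2k} x^{a_k} B_m(y,z)`, `r² = x² + y² + z²`,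
`a_k = l - 2k - m`. Since `B_m = Im (y + iz)^m` is harmonic and homogeneous of degree `m`, the
product rule and Euler's relation `Σ xᵢ ∂ᵢ f = d f` give
`Δ(r^{2k} x^a B_m) = 2k(2k + 2a + 2m + 1) r^{2k-2} x^a B_m + a(a-1) r^{2k} x^{a-2} B_m`.
In `Σ_k γ_k ΔT_k` the second part of the `k`-th term cancels the first part of the `(k+1)`-st,
because `γ_{k+1} / γ_k = -a_k(a_k - 1) / (2(k+1)(2l - 2k - 1))`; at the ends, the first part
vanishes for `k = 0` and `a_k(a_k - 1) = 0` for the last `k`.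
-/

open Finset ContinuousLinearMap Complex

section Calculus

variable {f g : R3 → ℝ} {v : R3} {i : Fin 3}

theorem pd_add (hf : DifferentiableAt ℝ f v) (hg : DifferentiableAt ℝ g v) :
    pd i (fun w => f w + g w) v = pd i f v + pd i g v := by
  simp [pd, fderiv_fun_add hf hg]

theorem pd_mul (hf : DifferentiableAt ℝ f v) (hg : DifferentiableAt ℝ g v) :
    pd i (fun w => f w * g w) v = pd i f v * g v + f v * pd i g v := by
  simp only [pd, fderiv_fun_mul hf hg, add_apply, smul_apply, smul_eq_mul]
  ring

theorem pd_const_mul (c : ℝ) : pd i (fun w => c * f w) v = c * pd i f v := by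
  rw [pd, show (fun w => c * f w) = c • f from rfl, fderiv_const_smul_field]
  rfl

theorem pd_sum {ι : Type*} {s : Finset ι} {F : ι → R3 → ℝ}
    (hF : ∀ k ∈ s, DifferentiableAt ℝ (F k) v) :
    pd i (fun w => ∑ k ∈ s, F k w) v = ∑ k ∈ s, pd i (F k) v := by
  simp [pd, fderiv_fun_sum hF]

theorem pd_comp_apply {φ : ℝ → ℝ} (j : Fin 3) (hφ : DifferentiableAt ℝ φ (v j)) :
    pd i (fun w => φ (w j)) v = if j = i then deriv φ (v j) else 0 := by
  have h : HasFDerivAt (fun w : R3 => φ (w j)) _ v :=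
    hφ.hasDerivAt.comp_hasFDerivAt v (hasFDerivAt_apply (𝕜 := ℝ) j v)
  rw [pd, h.fderiv]
  by_cases hji : j = i
  · subst hji
    simp
  · simp [hji]

theorem ContDiff.differentiable_pd (hf : ContDiff ℝ 2 f) (i : Fin 3) :
    Differentiable ℝ (pd i f) :=
  ((hf.fderiv_right (m := 1) le_rfl).clm_apply contDiff_const).differentiable one_ne_zero

theorem lap3_const_mul (c : ℝ) : lap3 (fun w => c * f w) v = c * lap3 f v := by
  simp only [lap3, pd_const_mul, mul_sum]

theorem lap3_sum {ι : Type*} {s : Finset ι} {F : ι → R3 → ℝ}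
    (hF : ∀ k ∈ s, ContDiff ℝ 2 (F k)) :
    lap3 (fun w => ∑ k ∈ s, F k w) v = ∑ k ∈ s, lap3 (F k) v := by
  have hpd : ∀ i, pd i (fun w => ∑ k ∈ s, F k w) = fun w => ∑ k ∈ s, pd i (F k) w :=
    fun i => funext fun w =>
      pd_sum fun k hk => ((hF k hk).differentiable two_ne_zero).differentiableAt
  simp only [lap3, hpd]
  rw [sum_comm]
  exact sum_congr rfl fun i _ =>
    pd_sum fun k hk => ((hF k hk).differentiable_pd i).differentiableAt

theorem lap3_mul (hf : ContDiff ℝ 2 f) (hg : ContDiff ℝ 2 g) :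
    lap3 (fun w => f w * g w) v =
      lap3 f v * g v + 2 * ∑ i, pd i f v * pd i g v + f v * lap3 g v := by
  have hf1 := hf.differentiable two_ne_zero
  have hg1 := hg.differentiable two_ne_zero
  have hpd : ∀ i, pd i (fun w => f w * g w) = fun w => pd i f w * g w + f w * pd i g w :=
    fun i => funext fun w => pd_mul (hf1 w) (hg1 w)
  have hpd2 : ∀ i, pd i (fun w => pd i f w * g w + f w * pd i g w) v =
      pd i (pd i f) v * g v + 2 * (pd i f v * pd i g v) + f v * pd i (pd i g) v := by
    intro i
    have hpf := hf.differentiable_pd i v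
    have hpg := hg.differentiable_pd i v
    rw [pd_add (f := fun w => pd i f w * g w) (g := fun w => f w * pd i g w)
        (hpf.fun_mul (hg1 v)) ((hf1 v).fun_mul hpg), pd_mul hpf (hg1 v), pd_mul (hf1 v) hpg]
    ring
  simp only [lap3, hpd, hpd2, sum_add_distrib, sum_mul, mul_sum]

theorem lap3_comp_apply {φ : ℝ → ℝ} (hφ : ContDiff ℝ 2 φ) (j : Fin 3) :
    lap3 (fun w => φ (w j)) v = deriv (deriv φ) (v j) := by
  have hpd : ∀ i, pd i (fun w => φ (w j)) = fun w => if j = i then deriv φ (w j) else 0 :=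
    fun i => funext fun w => pd_comp_apply j ((hφ.differentiable two_ne_zero) _)
  simp only [lap3, hpd]
  rw [Fintype.sum_eq_single j fun i hi => by simp [Ne.symm hi, pd]]
  simpa using pd_comp_apply (i := j) j (hφ.differentiable_deriv_two (v j))

theorem lap3_apply_pow (j : Fin 3) (n : ℕ) :
    lap3 (fun w => w j ^ n) v = n * (n - 1) * v j ^ (n - 2) := by
  rw [lap3_comp_apply (φ := fun x : ℝ => x ^ n) (by fun_prop)]
  have h := iter_deriv_pow n (v j) 2
  simp only [Function.iterate_succ, Function.iterate_zero, Function.comp_apply,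
    prod_range_succ, prod_range_zero, Nat.cast_zero, Nat.cast_one, sub_zero, one_mul] at h
  exact h

end Calculus

def HomogeneousOfDegree (d : ℕ) (f : R3 → ℝ) : Prop :=
  ∀ (t : ℝ) (w : R3), f (t • w) = t ^ d * f w

namespace HomogeneousOfDegree

variable {d e : ℕ} {f g : R3 → ℝ}

theorem mul (hf : HomogeneousOfDegree d f) (hg : HomogeneousOfDegree e g) :
    HomogeneousOfDegree (d + e) (fun w => f w * g w) := by
  intro t w
  dsimp only
  rw [hf, hg]
  ring

theorem pow (hf : HomogeneousOfDegree d f) (n : ℕ) :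
    HomogeneousOfDegree (d * n) (fun w => f w ^ n) := by
  intro t w
  dsimp only
  rw [hf, mul_pow, pow_mul]

theorem sum_mul_pd (hf : HomogeneousOfDegree d f) (hdiff : Differentiable ℝ f) (v : R3) :
    ∑ i, v i * pd i f v = d * f v := by
  have hray : HasDerivAt (fun t : ℝ => f (t • v)) (fderiv ℝ f v v) 1 := by
    have h := (hdiff (1 • v)).hasFDerivAt.comp_hasDerivAt (1 : ℝ)
      ((hasDerivAt_id 1).smul_const v)
    simp only [one_smul, Function.comp_def] at h
    exact h
  have hpow : HasDerivAt (fun t : ℝ => f (t • v)) (d * f v) 1 := by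
    rw [show (fun t : ℝ => f (t • v)) = fun t => t ^ d * f v from funext fun t => hf t v]
    simpa using (hasDerivAt_pow d (1 : ℝ)).mul_const (f v)
  rw [← hray.unique hpow]
  calc ∑ i, v i * pd i f v = fderiv ℝ f v (∑ i, v i • Pi.single i 1) := by simp [pd, map_sum]
    _ = fderiv ℝ f v v := by rw [← pi_eq_sum_univ']

end HomogeneousOfDegree

theorem homogeneousOfDegree_apply_pow (j : Fin 3) (n : ℕ) :
    HomogeneousOfDegree n (fun w => w j ^ n) := by
  intro t w
  simp [mul_pow]

theorem homogeneousOfDegree_sum_sq : HomogeneousOfDegree 2 (fun w => ∑ j, w j ^ 2) := by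
  intro t w
  simp [mul_pow, mul_sum]

section SumSq

variable {f : R3 → ℝ} {v : R3} {i : Fin 3}

theorem pd_sum_sq : pd i (fun w => ∑ j, w j ^ 2) v = 2 * v i := by
  rw [pd_sum fun j _ => by fun_prop]
  simp [pd_comp_apply (φ := fun x : ℝ => x ^ 2) _ (by fun_prop)]

theorem lap3_sum_sq : lap3 (fun w => ∑ j, w j ^ 2) v = 6 := by
  rw [lap3_sum fun j _ => by fun_prop]
  simp only [lap3_apply_pow, Fin.sum_univ_three]
  norm_num

theorem lap3_sum_sq_mul {d : ℕ} (hf : ContDiff ℝ 2 f) (hom : HomogeneousOfDegree d f) :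
    lap3 (fun w => (∑ j, w j ^ 2) * f w) v =
      (4 * d + 6) * f v + (∑ j, v j ^ 2) * lap3 f v := by
  rw [lap3_mul (by fun_prop) hf, lap3_sum_sq]
  simp only [pd_sum_sq, mul_assoc, ← mul_sum]
  rw [hom.sum_mul_pd (hf.differentiable two_ne_zero)]
  ring

end SumSq

noncomputable def yzToComplex : R3 →L[ℝ] ℂ :=
  (proj 1).smulRight (1 : ℂ) + (proj 2).smulRight I

theorem yzToComplex_apply (w : R3) : yzToComplex w = w 1 + w 2 * I := by
  simp [yzToComplex]

section ImComp

variable {φ : ℂ → ℂ} {v : R3} {i : Fin 3}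

theorem pd_im_comp_yzToComplex (hφ : DifferentiableAt ℂ φ (yzToComplex v)) :
    pd i (fun w => (φ (yzToComplex w)).im) v =
      (deriv φ (yzToComplex v) * yzToComplex (Pi.single i 1)).im := by
  have h : HasFDerivAt (fun w => (φ (yzToComplex w)).im) _ v :=
    imCLM.hasFDerivAt.comp v ((hφ.hasFDerivAt.restrictScalars ℝ).comp v yzToComplex.hasFDerivAt)
  rw [pd, h.fderiv]
  simp [mul_comm]

theorem contDiff_im_comp_yzToComplex (hφ : Differentiable ℂ φ) {n : WithTop ℕ∞} :
    ContDiff ℝ n (fun w => (φ (yzToComplex w)).im) :=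
  imCLM.contDiff.comp (((hφ.contDiff (n := n)).restrict_scalars ℝ).comp yzToComplex.contDiff)

theorem lap3_im_comp_yzToComplex (hφ : Differentiable ℂ φ) :
    lap3 (fun w => (φ (yzToComplex w)).im) v = 0 := by
  have hpd : ∀ i, pd i (fun w => (φ (yzToComplex w)).im) =
      fun w => (deriv φ (yzToComplex w) * yzToComplex (Pi.single i 1)).im :=
    fun i => funext fun w => pd_im_comp_yzToComplex (hφ _)
  have hpd2 : ∀ i,
      pd i (fun w => (deriv φ (yzToComplex w) * yzToComplex (Pi.single i 1)).im) v =
        (deriv (deriv φ) (yzToComplex v) * yzToComplex (Pi.single i 1) *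
          yzToComplex (Pi.single i 1)).im := fun i => by
    rw [pd_im_comp_yzToComplex (φ := fun z => deriv φ z * yzToComplex (Pi.single i 1))
      (by fun_prop), deriv_mul_const (hφ.deriv _)]
  simp only [lap3, hpd, hpd2]
  simp [Fin.sum_univ_three, yzToComplex_apply]

end ImComp

theorem homogeneousOfDegree_im_yzToComplex_pow (m : ℕ) :
    HomogeneousOfDegree m (fun w => ((yzToComplex w) ^ m).im) := by
  intro t w
  dsimp only
  rw [map_smul, real_smul, mul_pow, ← ofReal_pow, im_ofReal_mul]

theorem lap3_apply_pow_mul_im_yzToComplex_pow (a m : ℕ) (v : R3) :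
    lap3 (fun w => w 0 ^ a * ((yzToComplex w) ^ m).im) v =
      a * (a - 1) * v 0 ^ (a - 2) * ((yzToComplex v) ^ m).im := by
  have hB := contDiff_im_comp_yzToComplex (φ := fun z => z ^ m) (differentiable_pow m) (n := 2)
  have hB0 : pd 0 (fun w => ((yzToComplex w) ^ m).im) v = 0 := by
    rw [pd_im_comp_yzToComplex (φ := fun z => z ^ m) (differentiable_pow m _)]
    simp [yzToComplex_apply]
  rw [lap3_mul (by fun_prop) hB, lap3_apply_pow,
    lap3_im_comp_yzToComplex (φ := fun z => z ^ m) (differentiable_pow m)]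
  simp [hB0, pd_comp_apply (φ := fun x : ℝ => x ^ a) _ (by fun_prop)]

/-- `r^{2k} x^a B_m(y, z)`; thus `Π_l^m B_m = Σ_k γ_{lk}^{(m)} hTerm k (l - 2k - m) m`. -/
noncomputable def hTerm (k a m : ℕ) (w : R3) : ℝ :=
  (∑ j, w j ^ 2) ^ k * (w 0 ^ a * ((yzToComplex w) ^ m).im)

theorem contDiff_hTerm (k a m : ℕ) : ContDiff ℝ 2 (hTerm k a m) :=
  (by fun_prop : ContDiff ℝ 2 fun w : R3 => (∑ j, w j ^ 2) ^ k).mul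
    ((by fun_prop : ContDiff ℝ 2 fun w : R3 => w 0 ^ a).mul
      (contDiff_im_comp_yzToComplex (φ := fun z => z ^ m) (differentiable_pow m)))

theorem homogeneousOfDegree_hTerm (k a m : ℕ) :
    HomogeneousOfDegree (2 * k + (a + m)) (hTerm k a m) :=
  (homogeneousOfDegree_sum_sq.pow k).mul
    ((homogeneousOfDegree_apply_pow 0 a).mul (homogeneousOfDegree_im_yzToComplex_pow m))

theorem hTerm_zero (a m : ℕ) :
    hTerm 0 a m = fun w => w 0 ^ a * ((yzToComplex w) ^ m).im := by
  ext w
  simp [hTerm]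

theorem hTerm_succ (k a m : ℕ) :
    hTerm (k + 1) a m = fun w => (∑ j, w j ^ 2) * hTerm k a m w := by
  ext w
  simp only [hTerm, pow_succ']
  ring

/-- The truncated `k - 1` and `a - 2` only occur where their coefficient vanishes. -/
theorem lap3_hTerm (k a m : ℕ) (v : R3) :
    lap3 (hTerm k a m) v = 2 * k * (2 * k + 2 * a + 2 * m + 1) * hTerm (k - 1) a m v
      + a * (a - 1) * hTerm k (a - 2) m v := by
  induction k with
  | zero =>
    rw [hTerm_zero, lap3_apply_pow_mul_im_yzToComplex_pow]
    simp [hTerm, mul_assoc]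
  | succ k ih =>
    rw [hTerm_succ, lap3_sum_sq_mul (contDiff_hTerm k a m) (homogeneousOfDegree_hTerm k a m), ih]
    rcases k with _ | k
    · simp only [hTerm_succ]
      push_cast
      ring
    · simp only [hTerm_succ, Nat.add_sub_cancel]
      push_cast
      ring

theorem gam_eq_factorial {l k m : ℕ} (h : 2 * k + m ≤ l) :
    gam l k m = (-1) ^ k * 2⁻¹ ^ l * (2 * l - 2 * k).factorial /
      (k.factorial * (l - k).factorial * (l - 2 * k - m).factorial) := by
  rw [gam, Nat.cast_choose ℝ (by omega : k ≤ l), Nat.cast_choose ℝ (by omega : l ≤ 2 * l - 2 * k),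
    show 2 * l - 2 * k - l = l - 2 * k by omega]
  field_simp

theorem gam_succ_mul {l k m : ℕ} (h : m + 2 * k + 2 ≤ l) :
    2 * (k + 1) * (2 * l - 2 * k - 1 : ℝ) * gam l (k + 1) m =
      -(((l - 2 * k - m : ℕ) : ℝ) * ((l - 2 * k - m : ℕ) - 1) * gam l k m) := by
  obtain ⟨b, rfl⟩ : ∃ b, l = m + 2 * k + 2 + b := ⟨l - (m + 2 * k + 2), by omega⟩
  rw [gam_eq_factorial (by omega), gam_eq_factorial (by omega),
    show 2 * (m + 2 * k + 2 + b) - 2 * k = 2 * (m + k + b) + 2 + 1 + 1 by omega,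
    show 2 * (m + 2 * k + 2 + b) - 2 * (k + 1) = 2 * (m + k + b) + 2 by omega,
    show m + 2 * k + 2 + b - k = m + k + b + 1 + 1 by omega,
    show m + 2 * k + 2 + b - (k + 1) = m + k + b + 1 by omega,
    show m + 2 * k + 2 + b - 2 * k - m = b + 1 + 1 by omega,
    show m + 2 * k + 2 + b - 2 * (k + 1) - m = b by omega]
  simp only [Nat.factorial_succ (2 * (m + k + b) + 2 + 1), Nat.factorial_succ (2 * (m + k + b) + 2),
    Nat.factorial_succ (m + k + b + 1), Nat.factorial_succ (b + 1), Nat.factorial_succ b,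
    Nat.factorial_succ k, pow_succ]
  push_cast
  field_simp
  ring

theorem sum_range_succ_add_eq_zero {M : Type*} [AddCommMonoid M] {u w : ℕ → M} {n : ℕ}
    (h0 : u 0 = 0) (hn : w n = 0) (h : ∀ k < n, u (k + 1) + w k = 0) :
    ∑ k ∈ range (n + 1), (u k + w k) = 0 := by
  rw [sum_add_distrib, sum_range_succ', sum_range_succ w, h0, hn, add_zero, add_zero,
    ← sum_add_distrib]
  exact sum_eq_zero fun k hk => h k (mem_range.1 hk)

theorem stmt13_general (l m : ℕ) :
    ∀ v : R3, lap3 (Hfun l m) v = 0 := by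
  intro v
  set c := Real.sqrt (2 * ((l - m).factorial : ℝ) / ((l + m).factorial : ℝ))
  have hH : Hfun l m = fun w =>
      ∑ k ∈ range ((l - m) / 2 + 1), c * gam l k m * hTerm k (l - 2 * k - m) m w := by
    ext w
    simp only [Hfun, Hc, Pim, Bm, hTerm, Fin.sum_univ_three, yzToComplex_apply, mul_sum, sum_mul]
    exact sum_congr rfl fun k _ => by ring
  rw [hH, lap3_sum fun k _ => contDiff_const.mul (contDiff_hTerm _ _ _)]
  simp only [lap3_const_mul, lap3_hTerm, mul_add]
  refine sum_range_succ_add_eq_zero (by simp) ?_ fun k hk => ?_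
  · obtain h | h : l - 2 * ((l - m) / 2) - m = 0 ∨ l - 2 * ((l - m) / 2) - m = 1 := by omega
    all_goals simp [h]
  · have ha : ((l - 2 * (k + 1) - m : ℕ) : ℝ) = l - 2 * k - 2 - m := by
      rw [Nat.cast_sub (by omega), Nat.cast_sub (by omega)]
      push_cast
      ring
    rw [show l - 2 * k - m - 2 = l - 2 * (k + 1) - m by omega, Nat.add_sub_cancel, ha]
    push_cast
    linear_combination (c * hTerm k (l - 2 * (k + 1) - m) m v) *
      gam_succ_mul (by omega : m + 2 * k + 2 ≤ l)

/-- for `1 ≤ m ≤ l`, `H^{(l,m)}` is harmonic on all of ℝ³. -/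
theorem stmt13 (l m : ℕ) (hm : 1 ≤ m) (hml : m ≤ l) :
    ∀ v : R3, lap3 (Hfun l m) v = 0 :=
  stmt13_general l m
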